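/- For every real x, the improper integral (1/π)·∫_0^∞ cos(x·u + u³/3) du converges (i.e. the limit as R → ∞ of ∫_0^R cos(x·u + u³/3) du exists) and equals Ai(x); that is, the function R ↦ ∫_0^R cos(x·u + u³/3) du tends to π·Ai(x) as R → ∞. -/

import Mathlib

open Complex Filter MeasureTheory

/-- The Airy function `Ai`, defined by its Maclaurin series. -/
noncomputable def Ai (z : ℂ) : ℂ :=
  (((1 / ((3 : ℝ) ^ ((2 : ℝ) / 3) * Real.pi)) : ℝ) : ℂ) *
    ∑' n : ℕ,
      ((Real.Gamma ((n + 1) / 3) / n.factorial * Real.sin (2 * (n + 1) * Real.pi / 3) : ℝ) : ℂ) *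
        ((((3 : ℝ) ^ ((1 : ℝ) / 3) : ℝ) : ℂ) * z) ^ n

open scoped Real
open Set

/-!
The integrand `f(z) = exp (i (x z + z³/3))` is entire, so it has a primitive and its integral
over `[0, R]` equals its integral over the ray `[0, R ω]`, `ω = e^{iπ/6}`, minus the integral over
the arc `R e^{iθ}`, `0 ≤ θ ≤ π/6`. By Jordan's inequality the arc integral is `O(1/R)`. Since
`ω³ = i`, on the ray `f(t ω) = exp (i ω x t) exp (-t³/3)`, which is absolutely integrable; expanding
`exp (i ω x t)` and integrating termwise against the moments
`∫₀^∞ tⁿ e^{-t³/3} dt = 3^{(n-2)/3} Γ((n+1)/3)` gives a power series in `x` whose real part,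
because `Re ω^{4n+1} = sin (2(n+1)π/3)`, is `π Ai(x)`.
-/

theorem integral_deriv_mul_comp_eq_sub {f G : ℂ → ℂ} (hG : ∀ z, HasDerivAt G (f z) z)
    (hf : Continuous f) {γ γ' : ℝ → ℂ} (hγ : ∀ t, HasDerivAt γ (γ' t) t) (hγ' : Continuous γ')
    (a b : ℝ) : ∫ t in a..b, γ' t * f (γ t) = G (γ b) - G (γ a) := by
  have hγc : Continuous γ := continuous_iff_continuousAt.2 fun t => (hγ t).continuousAt
  refine intervalIntegral.integral_eq_sub_of_hasDerivAt (f := G ∘ γ) (fun t _ => ?_)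
    ((hγ'.mul (hf.comp hγc)).intervalIntegrable _ _)
  simpa [mul_comm] using (hG (γ t)).comp t (hγ t)

theorem integral_ray_eq_integral_add_integral_arc {f : ℂ → ℂ} (hf : Differentiable ℂ f)
    (α R : ℝ) :
    ∫ t in (0 : ℝ)..R, cexp (α * I) * f (t * cexp (α * I)) =
      (∫ t in (0 : ℝ)..R, f t) +
        ∫ θ in (0 : ℝ)..α, I * R * cexp (θ * I) * f (R * cexp (θ * I)) := by
  obtain ⟨G, hG⟩ := hf.isExactOn_univ
  replace hG : ∀ z, HasDerivAt G (f z) z := fun z => hG z (mem_univ z)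
  have hray := integral_deriv_mul_comp_eq_sub hG hf.continuous
    (fun t => ((hasDerivAt_id (t : ℂ)).comp_ofReal).mul_const (cexp (α * I))) continuous_const 0 R
  have hseg := integral_deriv_mul_comp_eq_sub hG hf.continuous
    (fun t => (hasDerivAt_id (t : ℂ)).comp_ofReal) continuous_const 0 R
  have harc := integral_deriv_mul_comp_eq_sub hG hf.continuous
    (fun θ => ((((hasDerivAt_id (θ : ℂ)).comp_ofReal).mul_const I).cexp).const_mul (R : ℂ))
    (by fun_prop) 0 α
  simp only [id, one_mul, Complex.ofReal_zero, zero_mul, mul_one, Complex.exp_zero]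
    at hray hseg harc
  rw [hray, hseg, show ∫ θ in (0 : ℝ)..α, I * R * cexp (θ * I) * f (R * cexp (θ * I)) =
    ∫ θ in (0 : ℝ)..α, R * (cexp (θ * I) * I) * f (R * cexp (θ * I)) from
    intervalIntegral.integral_congr fun θ _ => by ring, harc]
  ring

theorem integral_mul_exp_neg_sq_mul_le {R : ℝ} (hR : 0 < R) (b : ℝ) :
    ∫ θ in (0 : ℝ)..b, R * rexp (-(R ^ 2 * θ)) ≤ 1 / R := by
  have hderiv : ∀ θ, HasDerivAt (fun θ => -rexp (-(R ^ 2 * θ)) / R) (R * rexp (-(R ^ 2 * θ))) θ :=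
    fun θ => (((hasDerivAt_id θ).const_mul (R ^ 2)).neg.exp.neg.div_const R).congr_deriv
      (by field_simp; simp)
  rw [intervalIntegral.integral_eq_sub_of_hasDerivAt (fun θ _ => hderiv θ)
    (Continuous.intervalIntegrable (by fun_prop) _ _)]
  have := Real.exp_pos (-(R ^ 2 * b))
  simp only [mul_zero, neg_zero, Real.exp_zero]
  rw [div_sub_div_same, div_le_div_iff_of_pos_right hR]
  linarith

theorem integrable_cexp_mul_mul {μ : Measure ℝ} {g : ℝ → ℝ} (a : ℂ)
    (hg : AEStronglyMeasurable g μ) (hint : Integrable (fun t => rexp (‖a‖ * |t|) * ‖g t‖) μ) :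
    Integrable (fun t : ℝ => cexp (a * t) * g t) μ := by
  refine hint.mono' ((Continuous.aestronglyMeasurable (by fun_prop)).mul
    (Complex.continuous_ofReal.comp_aestronglyMeasurable hg)) (ae_of_all _ fun t => ?_)
  rw [norm_mul, Complex.norm_exp, Complex.norm_real]
  gcongr
  calc (a * t).re ≤ ‖a * t‖ := Complex.re_le_norm _
    _ = ‖a‖ * |t| := by rw [norm_mul, Complex.norm_real, Real.norm_eq_abs]

theorem hasSum_integral_cexp_mul {μ : Measure ℝ} {g : ℝ → ℝ} (a : ℂ)
    (hg : AEStronglyMeasurable g μ) (hint : Integrable (fun t => rexp (‖a‖ * |t|) * ‖g t‖) μ) :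
    HasSum (fun n : ℕ => a ^ n / n.factorial * ((∫ t, t ^ n * g t ∂μ : ℝ) : ℂ))
      (∫ t, cexp (a * t) * g t ∂μ) := by
  set F : ℕ → ℝ → ℂ := fun n t => (a * t) ^ n / n.factorial * g t
  have hF_norm : ∀ n t, ‖F n t‖ = (‖a‖ * |t|) ^ n / n.factorial * ‖g t‖ := fun n t => by
    simp [F, mul_pow]
  have hF_meas : ∀ n, AEStronglyMeasurable (F n) μ := fun n =>
    (Continuous.aestronglyMeasurable (by fun_prop)).mul
      (Complex.continuous_ofReal.comp_aestronglyMeasurable hg)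
  have hF_int : ∀ n, Integrable (F n) μ := fun n =>
    hint.mono' (hF_meas n) (ae_of_all _ fun t => by
      rw [hF_norm]; gcongr; exact Real.pow_div_factorial_le_exp _ (by positivity) n)
  have hF_sum : Summable fun n => ∫ t, ‖F n t‖ ∂μ := by
    refine summable_of_sum_range_le (c := ∫ t, rexp (‖a‖ * |t|) * ‖g t‖ ∂μ)
      (fun n => integral_nonneg fun t => norm_nonneg _) fun N => ?_
    rw [← integral_finsetSum _ fun n _ => (hF_int n).norm]
    refine integral_mono (integrable_finsetSum _ fun n _ => (hF_int n).norm) hint fun t => ?_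
    simp only [hF_norm, ← Finset.sum_mul]
    gcongr
    exact Real.sum_le_exp_of_nonneg (by positivity) N
  have hterm : ∀ n, ∫ t, F n t ∂μ = a ^ n / n.factorial * ((∫ t, t ^ n * g t ∂μ : ℝ) : ℂ) :=
    fun n => by
      rw [← integral_complex_ofReal, ← integral_const_mul]
      refine integral_congr_ae (ae_of_all _ fun t => ?_)
      simp only [F]; push_cast; ring
  have htsum : ∀ t, ∑' n, F n t = cexp (a * t) * g t := fun t => by
    rw [((NormedSpace.expSeries_div_hasSum_exp (a * t)).mul_right (g t : ℂ)).tsum_eq,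
      Complex.exp_eq_exp_ℂ]
  have h := hasSum_integral_of_summable_integral_norm hF_int hF_sum
  simp only [hterm, htsum] at h
  exact h

theorem integrableOn_exp_mul_sub_cube_div_three (b : ℝ) :
    IntegrableOn (fun t => rexp (b * t - t ^ 3 / 3)) (Ioi 0) := by
  refine integrable_of_isBigO_exp_neg one_pos (by fun_prop) (Asymptotics.isBigO_iff.2 ⟨1, ?_⟩)
  filter_upwards [eventually_ge_atTop (3 * (|b| + 1))] with t ht
  have hb := le_abs_self b
  have ht0 : 0 ≤ t := le_trans (by positivity) ht
  rw [Real.norm_of_nonneg (Real.exp_pos _).le, Real.norm_of_nonneg (Real.exp_pos _).le, one_mul,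
    Real.exp_le_exp]
  nlinarith [mul_le_mul_of_nonneg_left ht (mul_nonneg ht0 ht0), abs_nonneg b]

theorem integrableOn_exp_mul_abs_mul_norm_exp_neg_cube_div_three (b : ℝ) :
    IntegrableOn (fun t => rexp (b * |t|) * ‖rexp (-(t ^ 3 / 3))‖) (Ioi 0) := by
  refine (integrableOn_exp_mul_sub_cube_div_three b).congr_fun (fun t ht => ?_) measurableSet_Ioi
  dsimp only
  rw [abs_of_pos ht, Real.norm_of_nonneg (Real.exp_pos _).le, ← Real.exp_add, sub_eq_add_neg]

theorem integral_pow_mul_exp_neg_cube_div_three (n : ℕ) :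
    ∫ t in Ioi (0 : ℝ), t ^ n * rexp (-(t ^ 3 / 3)) =
      3 ^ (((n : ℝ) - 2) / 3) * Real.Gamma (((n : ℝ) + 1) / 3) := by
  have h := _root_.integral_rpow_mul_exp_neg_mul_rpow (p := 3) (q := n) (b := 1 / 3)
    (by norm_num) (by linarith [(n.cast_nonneg : (0 : ℝ) ≤ n)]) (by norm_num)
  have hpow : (3 : ℝ) ^ (((n : ℝ) - 2) / 3) = (1 / 3) ^ (-((n : ℝ) + 1) / 3) * (1 / 3) := by
    rw [one_div, Real.inv_rpow (by norm_num), ← Real.rpow_neg (by norm_num),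
      show ((n : ℝ) - 2) / 3 = -(-((n : ℝ) + 1) / 3) - 1 by ring, Real.rpow_sub_one (by norm_num),
      div_eq_mul_inv]
  rw [hpow, ← h]
  refine setIntegral_congr_fun measurableSet_Ioi fun t _ => ?_
  rw [Real.rpow_natCast, Real.rpow_ofNat]
  ring_nf

noncomputable def airyIntegrand (x : ℝ) (z : ℂ) : ℂ := cexp (I * (x * z + z ^ 3 / 3))

theorem differentiable_airyIntegrand (x : ℝ) : Differentiable ℂ (airyIntegrand x) := by
  unfold airyIntegrand; fun_prop

theorem re_airyIntegrand_ofReal (x u : ℝ) :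
    (airyIntegrand x u).re = Real.cos (x * u + u ^ 3 / 3) := by
  rw [airyIntegrand, show I * (x * u + u ^ 3 / 3) = ((x * u + u ^ 3 / 3 : ℝ) : ℂ) * I by
    push_cast; ring, Complex.exp_ofReal_mul_I_re]

theorem re_integral_airyIntegrand (x R : ℝ) :
    (∫ t in (0 : ℝ)..R, airyIntegrand x t).re =
      ∫ u in (0 : ℝ)..R, Real.cos (x * u + u ^ 3 / 3) := by
  simp_rw [← re_airyIntegrand_ofReal]
  exact (Complex.reCLM.intervalIntegral_comp_comm
    (((differentiable_airyIntegrand x).continuous.comp Complex.continuous_ofReal).intervalIntegrable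
      _ _)).symm

theorem norm_airyIntegrand_arc (x R θ : ℝ) :
    ‖airyIntegrand x (R * cexp (θ * I))‖ =
      rexp (-(x * R * Real.sin θ) - R ^ 3 * Real.sin (3 * θ) / 3) := by
  have hcube : ((R : ℂ) * cexp (θ * I)) ^ 3 = ((R ^ 3 : ℝ) : ℂ) * cexp ((3 * θ : ℝ) * I) := by
    rw [mul_pow, ← Complex.exp_nat_mul]; push_cast; ring_nf
  rw [airyIntegrand, Complex.norm_exp, mul_add, hcube]
  simp only [Complex.mul_re, Complex.add_re, Complex.I_re, Complex.I_im, Complex.mul_im,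
    Complex.div_re, Complex.div_im, Complex.ofReal_re, Complex.ofReal_im,
    Complex.exp_ofReal_mul_I_re, Complex.exp_ofReal_mul_I_im]
  norm_num
  ring

theorem norm_airyIntegrand_arc_le {x R θ : ℝ} (hR : 0 < R) (hRx : π * (|x| + R) ≤ 2 * R ^ 2)
    (hθ₀ : 0 ≤ θ) (hθ : θ ≤ π / 6) :
    ‖airyIntegrand x (R * cexp (θ * I))‖ ≤ rexp (-(R ^ 2 * θ)) := by
  rw [norm_airyIntegrand_arc, Real.exp_le_exp]
  have hsin_le : Real.sin θ ≤ θ := Real.sin_le hθ₀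
  have hsin_nonneg : 0 ≤ Real.sin θ := Real.sin_nonneg_of_nonneg_of_le_pi hθ₀ (by linarith)
  have hsin3 : 2 / π * (3 * θ) ≤ Real.sin (3 * θ) := Real.mul_le_sin (by linarith) (by linarith)
  have hlin : -(x * R * Real.sin θ) ≤ |x| * R * θ := by
    have hx := neg_abs_le x
    have habs : |x| * R * Real.sin θ ≤ |x| * R * θ := by gcongr
    nlinarith [mul_nonneg hR.le hsin_nonneg]
  have hcub : R ^ 3 * (6 * θ / π) ≤ R ^ 3 * Real.sin (3 * θ) := by
    gcongr; linarith [show 2 / π * (3 * θ) = 6 * θ / π by ring]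
  have hcoef : (|x| * R + R ^ 2) * θ ≤ R ^ 3 * (6 * θ / π) / 3 := by
    rw [show R ^ 3 * (6 * θ / π) / 3 = 2 * R ^ 2 / π * R * θ by ring]
    have : |x| + R ≤ 2 * R ^ 2 / π := by rw [le_div_iff₀ Real.pi_pos]; linarith
    nlinarith [mul_le_mul_of_nonneg_right this (mul_nonneg hR.le hθ₀)]
  nlinarith

noncomputable def airyArc (x R : ℝ) : ℂ :=
  ∫ θ in (0 : ℝ)..(π / 6), I * R * cexp (θ * I) * airyIntegrand x (R * cexp (θ * I))

theorem norm_airyArc_le {x R : ℝ} (hR : 0 < R) (hRx : π * (|x| + R) ≤ 2 * R ^ 2) :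
    ‖airyArc x R‖ ≤ 1 / R := by
  have hπ : 0 ≤ π / 6 := by positivity
  refine (intervalIntegral.norm_integral_le_of_norm_le hπ (Filter.Eventually.of_forall
    fun θ hθ => ?_) (Continuous.intervalIntegrable (by fun_prop) _ _)).trans
    (integral_mul_exp_neg_sq_mul_le hR _)
  rw [norm_mul, norm_mul, norm_mul, Complex.norm_I, Complex.norm_real, Real.norm_of_nonneg hR.le,
    Complex.norm_exp_ofReal_mul_I, one_mul, mul_one]
  exact mul_le_mul_of_nonneg_left (norm_airyIntegrand_arc_le hR hRx hθ.1.le hθ.2) hR.le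

theorem tendsto_airyArc_atTop (x : ℝ) : Tendsto (airyArc x) atTop (nhds 0) := by
  refine squeeze_zero_norm' ?_ (tendsto_const_nhds.div_atTop (a := 1) tendsto_id)
  filter_upwards [eventually_ge_atTop 1, eventually_ge_atTop (π * (|x| + 1))] with R hR1 hRx
  refine norm_airyArc_le (by linarith) ?_
  nlinarith [mul_le_mul_of_nonneg_right hRx (by linarith : (0 : ℝ) ≤ R),
    mul_nonneg (mul_nonneg Real.pi_pos.le (abs_nonneg x)) (by linarith : (0 : ℝ) ≤ R - 1)]

section Rotation

local notation "ω" => cexp (↑(π / 6) * I)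

theorem exp_pi_div_six_mul_I_pow (k : ℕ) : ω ^ k = cexp (↑(k * π / 6) * I) := by
  rw [← Complex.exp_nat_mul]; push_cast; ring_nf

theorem exp_pi_div_six_mul_I_pow_three : ω ^ 3 = I := by
  rw [exp_pi_div_six_mul_I_pow, show ((3 : ℕ) : ℝ) * π / 6 = π / 2 by push_cast; ring,
    Complex.exp_mul_I, ← Complex.ofReal_cos, ← Complex.ofReal_sin, Real.cos_pi_div_two,
    Real.sin_pi_div_two]
  simp

theorem airyIntegrand_mul_exp_pi_div_six_mul_I (x t : ℝ) :
    airyIntegrand x (t * ω) = cexp (I * ω * x * t) * rexp (-(t ^ 3 / 3)) := by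
  rw [airyIntegrand, Complex.ofReal_exp, ← Complex.exp_add, mul_pow,
    exp_pi_div_six_mul_I_pow_three]
  congr 1
  push_cast
  ring_nf
  rw [Complex.I_sq]
  ring

theorem tendsto_integral_airyIntegrand_atTop (x : ℝ) :
    Tendsto (fun R => ∫ t in (0 : ℝ)..R, airyIntegrand x t) atTop
      (nhds (ω * ∫ t : ℝ in Ioi 0, cexp (I * ω * x * t) * rexp (-(t ^ 3 / 3)))) := by
  have hint := integrable_cexp_mul_mul (I * ω * x) (by fun_prop)
    (integrableOn_exp_mul_abs_mul_norm_exp_neg_cube_div_three ‖I * ω * x‖)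
  have hray := (intervalIntegral_tendsto_integral_Ioi 0 (hint.const_mul ω) tendsto_id).sub
    (tendsto_airyArc_atTop x)
  rw [integral_const_mul, sub_zero] at hray
  refine hray.congr fun R => ?_
  simp only [id, ← airyIntegrand_mul_exp_pi_div_six_mul_I, airyArc,
    integral_ray_eq_integral_add_integral_arc (differentiable_airyIntegrand x),
    add_sub_cancel_right]

theorem hasSum_integral_cexp_mul_exp_neg_cube_div_three (x : ℝ) :
    HasSum (fun n : ℕ => (I * ω * x) ^ n / n.factorial *
        ((3 ^ (((n : ℝ) - 2) / 3) * Real.Gamma (((n : ℝ) + 1) / 3) : ℝ) : ℂ))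
      (∫ t : ℝ in Ioi 0, cexp (I * ω * x * t) * rexp (-(t ^ 3 / 3))) := by
  simpa only [integral_pow_mul_exp_neg_cube_div_three] using
    hasSum_integral_cexp_mul (I * ω * x) (by fun_prop)
      (integrableOn_exp_mul_abs_mul_norm_exp_neg_cube_div_three ‖I * ω * x‖)

theorem pi_mul_Ai_eq_re {x : ℝ} {J : ℂ} (hJ : HasSum (fun n : ℕ => (I * ω * x) ^ n / n.factorial *
      ((3 ^ (((n : ℝ) - 2) / 3) * Real.Gamma (((n : ℝ) + 1) / 3) : ℝ) : ℂ)) J) :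
    (π : ℂ) * Ai x = (ω * J).re := by
  have hterm : ∀ n : ℕ, (3 : ℝ) ^ ((2 : ℝ) / 3) * (ω * ((I * ω * x) ^ n / n.factorial *
      ((3 ^ (((n : ℝ) - 2) / 3) * Real.Gamma (((n : ℝ) + 1) / 3) : ℝ) : ℂ))).re =
      Real.Gamma ((n + 1) / 3) / n.factorial * Real.sin (2 * (n + 1) * π / 3) *
        ((3 : ℝ) ^ ((1 : ℝ) / 3) * x) ^ n := fun n => by
    have hω : ω * (I * ω * x) ^ n = cexp (↑((4 * n + 1 : ℕ) * π / 6) * I) * (x ^ n : ℝ) :=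
      calc ω * (I * ω * x) ^ n = ω * (ω ^ 3 * ω) ^ n * x ^ n := by
            rw [exp_pi_div_six_mul_I_pow_three]; ring
        _ = ω ^ (4 * n + 1) * (x ^ n : ℝ) := by push_cast; ring
        _ = _ := by rw [exp_pi_div_six_mul_I_pow]
    have hsin : Real.sin (2 * (n + 1) * π / 3) = Real.cos ((4 * n + 1 : ℕ) * π / 6) := by
      rw [← Real.sin_add_pi_div_two]; push_cast; ring_nf
    have hthree : (3 : ℝ) ^ ((2 : ℝ) / 3) * 3 ^ (((n : ℝ) - 2) / 3) =
        ((3 : ℝ) ^ ((1 : ℝ) / 3)) ^ n := by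
      rw [← Real.rpow_add (by norm_num), ← Real.rpow_mul_natCast (by norm_num)]; ring_nf
    rw [show ω * ((I * ω * x) ^ n / n.factorial *
        ((3 ^ (((n : ℝ) - 2) / 3) * Real.Gamma (((n : ℝ) + 1) / 3) : ℝ) : ℂ)) =
        ω * (I * ω * x) ^ n * ((3 ^ (((n : ℝ) - 2) / 3) * Real.Gamma (((n : ℝ) + 1) / 3) /
          n.factorial : ℝ) : ℂ) by push_cast; ring, hω, mul_assoc, ← Complex.ofReal_mul,
      Complex.re_mul_ofReal, Complex.exp_ofReal_mul_I_re, hsin, mul_pow, ← hthree]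
    ring
  have hre := (Complex.hasSum_re (hJ.mul_left ω)).mul_left ((3 : ℝ) ^ ((2 : ℝ) / 3))
  simp only [hterm] at hre
  have hsum : ∑' n : ℕ, ((Real.Gamma ((n + 1) / 3) / n.factorial *
      Real.sin (2 * (n + 1) * π / 3) : ℝ) : ℂ) * ((((3 : ℝ) ^ ((1 : ℝ) / 3) : ℝ) : ℂ) * x) ^ n =
      (((3 : ℝ) ^ ((2 : ℝ) / 3) * (ω * J).re : ℝ) : ℂ) := by
    rw [← hre.tsum_eq, Complex.ofReal_tsum]; push_cast; rfl
  rw [Ai, hsum]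
  push_cast
  field_simp

end Rotation

theorem stmt15 (x : ℝ) :
    Tendsto (fun R : ℝ => ((∫ u in (0 : ℝ)..R, Real.cos (x * u + u ^ 3 / 3) : ℝ) : ℂ))
      atTop (nhds ((Real.pi : ℂ) * Ai (x : ℂ))) := by
  rw [pi_mul_Ai_eq_re (hasSum_integral_cexp_mul_exp_neg_cube_div_three x)]
  simp only [← re_integral_airyIntegrand]
  exact (Complex.continuous_ofReal.comp Complex.continuous_re).continuousAt.tendsto.comp
    (tendsto_integral_airyIntegrand_atTop x)
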